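/- Weak triangle inequality for Rényi divergence (finite case): for probability mass functions μ₁, μ₂, μ₃ on a finite set X with μ₁ ≪ μ₂ ≪ μ₃, and any α > 1 and p, q > 1 with 1/p + 1/q = 1, one has D^α(μ₁‖μ₃) ≤ ((pα − 1)/(p(α − 1))) · D^{pα}(μ₁‖μ₂) + D^{(q/p)(pα−1)}(μ₂‖μ₃). -/

import Mathlib

/-! The sum `∑ μ₁^α μ₃^(1-α)` factors pointwise as `(μ₁^α μ₂^(1/p-α)) · (μ₂^(α-1/p) μ₃^(1-α))`;
Hölder's inequality with exponents `p, q` bounds it by the `1/p`-th power of the Rényi sum of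
`(μ₁, μ₂)` at order `pα` times the `1/q`-th power of that of `(μ₂, μ₃)` at order
`q(α-1) + 1 = (q/p)(pα-1)`. Taking logarithms and dividing by `α - 1` gives the inequality. -/

open Finset

/-- Rényi divergence of order `α` between mass functions on a finite set. -/
noncomputable def renyiD {X : Type*} [Fintype X] (α : ℝ) (μ ν : X → ℝ) : ℝ :=
  (1 / (α - 1)) * Real.log (∑ x, μ x ^ α * ν x ^ (1 - α))

lemma Real.log_le_of_le_rpow_mul_rpow {z x y a b : ℝ} (hz : 0 < z) (hx : 0 < x) (hy : 0 < y)
    (h : z ≤ x ^ a * y ^ b) : Real.log z ≤ a * Real.log x + b * Real.log y := by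
  calc Real.log z ≤ Real.log (x ^ a * y ^ b) := Real.log_le_log hz h
    _ = a * Real.log x + b * Real.log y := by
      rw [Real.log_mul (by positivity) (by positivity), Real.log_rpow hx, Real.log_rpow hy]

lemma Real.mul_rpow_mul_rpow {a b : ℝ} (ha : 0 ≤ a) (hb : 0 ≤ b) (s t r : ℝ) :
    (a ^ s * b ^ t) ^ r = a ^ (s * r) * b ^ (t * r) := by
  rw [Real.mul_rpow (by positivity) (by positivity), ← Real.rpow_mul ha, ← Real.rpow_mul hb]

noncomputable def renyiSum {X : Type*} [Fintype X] (α : ℝ) (μ ν : X → ℝ) : ℝ :=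
  ∑ x, μ x ^ α * ν x ^ (1 - α)

lemma renyiD_eq_log_renyiSum {X : Type*} [Fintype X] (α : ℝ) (μ ν : X → ℝ) :
    renyiD α μ ν = 1 / (α - 1) * Real.log (renyiSum α μ ν) := rfl

lemma renyiSum_pos {X : Type*} [Fintype X] {μ ν : X → ℝ} (hμ : ∀ x, 0 ≤ μ x)
    (hν : ∀ x, 0 ≤ ν x) {x₀ : X} (hμx₀ : 0 < μ x₀) (hνx₀ : 0 < ν x₀) (α : ℝ) :
    0 < renyiSum α μ ν :=
  Finset.sum_pos' (fun x _ ↦ by have := hμ x; have := hν x; positivity)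
    ⟨x₀, mem_univ x₀, by positivity⟩

lemma renyiSum_le_rpow_mul_rpow {X : Type*} [Fintype X] {μ₁ μ₂ μ₃ : X → ℝ}
    (h₁0 : ∀ x, 0 ≤ μ₁ x) (h₂0 : ∀ x, 0 ≤ μ₂ x) (h₃0 : ∀ x, 0 ≤ μ₃ x)
    (hac₁₂ : ∀ x, μ₂ x = 0 → μ₁ x = 0) {α p q : ℝ} (hα : α ≠ 0) (hpq : p.HolderConjugate q) :
    renyiSum α μ₁ μ₃ ≤
      renyiSum (p * α) μ₁ μ₂ ^ (1 / p) * renyiSum (q * (α - 1) + 1) μ₂ μ₃ ^ (1 / q) := by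
  set f : X → ℝ := fun x ↦ μ₁ x ^ α * μ₂ x ^ (1 / p - α)
  set g : X → ℝ := fun x ↦ μ₂ x ^ (α - 1 / p) * μ₃ x ^ (1 - α)
  have hfg : ∀ x, f x * g x = μ₁ x ^ α * μ₃ x ^ (1 - α) := by
    intro x
    rcases (h₂0 x).lt_or_eq with h₂x | h₂x
    · calc f x * g x
            = μ₁ x ^ α * (μ₂ x ^ (1 / p - α) * μ₂ x ^ (α - 1 / p)) * μ₃ x ^ (1 - α) := by ring
        _ = μ₁ x ^ α * μ₃ x ^ (1 - α) := by
            rw [← Real.rpow_add h₂x, sub_add_sub_cancel', sub_self, Real.rpow_zero, mul_one]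
    · simp [f, g, hac₁₂ x h₂x.symm, Real.zero_rpow hα]
  have hfp : ∀ x, f x ^ p = μ₁ x ^ (p * α) * μ₂ x ^ (1 - p * α) := by
    intro x
    rw [Real.mul_rpow_mul_rpow (h₁0 x) (h₂0 x)]
    congr 2 <;> field_simp [hpq.ne_zero]
  have hgq : ∀ x, g x ^ q = μ₂ x ^ (q * (α - 1) + 1) * μ₃ x ^ (1 - (q * (α - 1) + 1)) := by
    intro x
    rw [Real.mul_rpow_mul_rpow (h₂0 x) (h₃0 x)]
    congr 2
    · linear_combination -hpq.symm.div_conj_eq_sub_one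
    · ring
  calc renyiSum α μ₁ μ₃ = ∑ x, f x * g x := by simp only [renyiSum, hfg]
    _ ≤ (∑ x, f x ^ p) ^ (1 / p) * (∑ x, g x ^ q) ^ (1 / q) :=
      Real.inner_le_Lp_mul_Lq_of_nonneg univ hpq
        (fun x _ ↦ by have := h₁0 x; have := h₂0 x; positivity)
        (fun x _ ↦ by have := h₂0 x; have := h₃0 x; positivity)
    _ = _ := by simp only [renyiSum, hfp, hgq]

lemma renyiD_le_of_holderConjugate {X : Type*} [Fintype X] {μ₁ μ₂ μ₃ : X → ℝ}
    (h₁0 : ∀ x, 0 ≤ μ₁ x) (h₂0 : ∀ x, 0 ≤ μ₂ x) (h₃0 : ∀ x, 0 ≤ μ₃ x) (hμ₁ : μ₁ ≠ 0)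
    (hac₁₂ : ∀ x, μ₂ x = 0 → μ₁ x = 0) (hac₂₃ : ∀ x, μ₃ x = 0 → μ₂ x = 0)
    {α p q : ℝ} (hα : 1 < α) (hpq : p.HolderConjugate q) :
    renyiD α μ₁ μ₃ ≤
      ((p * α - 1) / (p * (α - 1))) * renyiD (p * α) μ₁ μ₂ + renyiD (q * (α - 1) + 1) μ₂ μ₃ := by
  obtain ⟨x₀, hx₀⟩ := Function.ne_iff.mp hμ₁
  have h₁x₀ : 0 < μ₁ x₀ := (h₁0 x₀).lt_of_ne' hx₀
  have h₂x₀ : 0 < μ₂ x₀ := (h₂0 x₀).lt_of_ne' (mt (hac₁₂ x₀) hx₀)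
  have h₃x₀ : 0 < μ₃ x₀ := (h₃0 x₀).lt_of_ne' (mt (hac₂₃ x₀) h₂x₀.ne')
  have hlog := Real.log_le_of_le_rpow_mul_rpow (renyiSum_pos h₁0 h₃0 h₁x₀ h₃x₀ α)
    (renyiSum_pos h₁0 h₂0 h₁x₀ h₂x₀ _) (renyiSum_pos h₂0 h₃0 h₂x₀ h₃x₀ _)
    (renyiSum_le_rpow_mul_rpow h₁0 h₂0 h₃0 hac₁₂ (by positivity) hpq)
  have hα₁ : 0 < α - 1 := by linarith
  have hpα₁ : 0 < p * α - 1 := by nlinarith [hpq.lt]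
  simp only [renyiD_eq_log_renyiSum]
  calc 1 / (α - 1) * Real.log (renyiSum α μ₁ μ₃)
      ≤ 1 / (α - 1) * (1 / p * Real.log (renyiSum (p * α) μ₁ μ₂) +
          1 / q * Real.log (renyiSum (q * (α - 1) + 1) μ₂ μ₃)) :=
        mul_le_mul_of_nonneg_left hlog (by positivity)
    _ = _ := by
      rw [add_sub_cancel_right, ← mul_assoc, div_mul_div_comm, mul_one,
        div_mul_cancel_right₀ hpα₁.ne']
      field_simp [hpq.ne_zero, hpq.symm.ne_zero]

theorem renyi_weak_triangle_general {X : Type*} [Fintype X] (μ₁ μ₂ μ₃ : X → ℝ)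
    (h₁0 : ∀ x, 0 ≤ μ₁ x) (h₂0 : ∀ x, 0 ≤ μ₂ x) (h₃0 : ∀ x, 0 ≤ μ₃ x)
    (h₁s : ∑ x, μ₁ x = 1)
    (hac₁₂ : ∀ x, μ₂ x = 0 → μ₁ x = 0) (hac₂₃ : ∀ x, μ₃ x = 0 → μ₂ x = 0)
    (α p q : ℝ) (hα : 1 < α) (hp : 1 < p)
    (hpq : 1 / p + 1 / q = 1) :
    renyiD α μ₁ μ₃ ≤
      ((p * α - 1) / (p * (α - 1))) * renyiD (p * α) μ₁ μ₂ +
        renyiD ((q / p) * (p * α - 1)) μ₂ μ₃ := by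
  have hconj : p.HolderConjugate q :=
    Real.holderConjugate_iff.mpr ⟨hp, by simpa only [one_div] using hpq⟩
  have hexp : q / p * (p * α - 1) = q * (α - 1) + 1 := by
    rw [mul_sub, mul_one, ← mul_assoc, div_mul_cancel₀ q hconj.ne_zero,
      hconj.symm.div_conj_eq_sub_one]
    ring
  rw [hexp]
  exact renyiD_le_of_holderConjugate h₁0 h₂0 h₃0 (fun h ↦ by simp [h] at h₁s) hac₁₂ hac₂₃ hα hconj

/-- Weak triangle inequality for Rényi divergence (finite case). -/
theorem renyi_weak_triangle {X : Type*} [Fintype X] (μ₁ μ₂ μ₃ : X → ℝ)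
    (h₁0 : ∀ x, 0 ≤ μ₁ x) (h₂0 : ∀ x, 0 ≤ μ₂ x) (h₃0 : ∀ x, 0 ≤ μ₃ x)
    (h₁s : ∑ x, μ₁ x = 1) (h₂s : ∑ x, μ₂ x = 1) (h₃s : ∑ x, μ₃ x = 1)
    (hac₁₂ : ∀ x, μ₂ x = 0 → μ₁ x = 0) (hac₂₃ : ∀ x, μ₃ x = 0 → μ₂ x = 0)
    (α p q : ℝ) (hα : 1 < α) (hp : 1 < p) (hq : 1 < q)
    (hpq : 1 / p + 1 / q = 1) :
    renyiD α μ₁ μ₃ ≤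
      ((p * α - 1) / (p * (α - 1))) * renyiD (p * α) μ₁ μ₂ +
        renyiD ((q / p) * (p * α - 1)) μ₂ μ₃ :=
  renyi_weak_triangle_general μ₁ μ₂ μ₃ h₁0 h₂0 h₃0 h₁s hac₁₂ hac₂₃ α p q hα hp hpq
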